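/- Let Σ_x ≻ O, let {V_i}, i ∈ I, be symmetric matrices, and suppose Σ* satisfies (Σ_x − Σ*)^{1/2} V_i (Σ_x − Σ*)^{1/2} ⪰ O for all i ∈ I. Then any symmetric Σ^c with Σ* ⪯ Σ^c ⪯ Σ_x also satisfies (Σ_x − Σ^c)^{1/2} V_i (Σ_x − Σ^c)^{1/2} ⪰ O for all i ∈ I. -/

import Mathlib

open Matrix

namespace Matrix.PosSemidef

open scoped ComplexOrder

/-- The positive semidefinite square root of a positive semidefinite matrix
(the definition removed from Mathlib, restored with its old meaning). -/
noncomputable def sqrt {n : Type*} [Fintype n] [DecidableEq n] {𝕜 : Type*} [RCLike 𝕜]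
    {A : Matrix n n 𝕜} (hA : PosSemidef A) : Matrix n n 𝕜 :=
  hA.1.eigenvectorUnitary.1 * diagonal ((↑) ∘ (√·) ∘ hA.1.eigenvalues) *
  (star hA.1.eigenvectorUnitary : Matrix n n 𝕜)

lemma posSemidef_sqrt {n : Type*} [Fintype n] [DecidableEq n] {𝕜 : Type*} [RCLike 𝕜]
    {A : Matrix n n 𝕜} (hA : PosSemidef A) : PosSemidef hA.sqrt := by
  have hd : PosSemidef (diagonal (((↑) ∘ (√·) ∘ hA.1.eigenvalues) : n → 𝕜)) :=
    PosSemidef.diagonal (fun i => by simp [Real.sqrt_nonneg])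
  have := hd.mul_mul_conjTranspose_same (hA.1.eigenvectorUnitary : Matrix n n 𝕜)
  unfold sqrt
  simpa [star_eq_conjTranspose] using this

lemma sqrt_mul_self {n : Type*} [Fintype n] [DecidableEq n] {𝕜 : Type*} [RCLike 𝕜]
    {A : Matrix n n 𝕜} (hA : PosSemidef A) : hA.sqrt * hA.sqrt = A := by
  unfold sqrt
  conv_rhs => rw [hA.1.spectral_theorem, Unitary.conjStarAlgAut_apply]
  have hU : (star hA.1.eigenvectorUnitary : Matrix n n 𝕜) * hA.1.eigenvectorUnitary = 1 :=
    Unitary.coe_star_mul_self _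
  have e : ∀ (U D E W : Matrix n n 𝕜), U * D * W * (U * E * W) = U * (D * (W * U) * E) * W := by
    intro U D E W; simp only [Matrix.mul_assoc]
  rw [e, hU, Matrix.mul_one, diagonal_mul_diagonal]
  congr 2
  refine congrArg diagonal (funext fun i => ?_)
  simp only [Function.comp_apply]
  rw [← RCLike.ofReal_mul, Real.mul_self_sqrt (hA.eigenvalues_nonneg i)]

end Matrix.PosSemidef

/-- For a symmetric operator on a finite-dimensional real inner product space,
the range is the orthogonal complement of the kernel. -/
lemma aux_range_eq_ker_orthogonal {E : Type*} [NormedAddCommGroup E]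
    [InnerProductSpace ℝ E] [FiniteDimensional ℝ E] {T : E →ₗ[ℝ] E}
    (hT : T.IsSymmetric) :
    LinearMap.range T = (LinearMap.ker T)ᗮ := by
  have hle : LinearMap.range T ≤ (LinearMap.ker T)ᗮ := by
    rintro _ ⟨x, rfl⟩
    intro v hv
    have hv0 : T v = 0 := hv
    have := hT v x
    rw [hv0, inner_zero_left] at this
    exact this.symm
  refine Submodule.eq_of_le_of_finrank_eq hle ?_
  have h1 := LinearMap.finrank_range_add_finrank_ker T
  have h2 := Submodule.finrank_add_finrank_orthogonal (LinearMap.ker T)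
  omega

/-- If `S` is a real symmetric matrix and `y` is orthogonal to the kernel of `S`,
then `y` is in the range of `S`. -/
lemma aux_exists_mulVec {p : ℕ} {S : Matrix (Fin p) (Fin p) ℝ}
    (hS : S.IsHermitian) (y : Fin p → ℝ)
    (hy : ∀ v : Fin p → ℝ, S *ᵥ v = 0 → v ⬝ᵥ y = 0) :
    ∃ z, S *ᵥ z = y := by
  have hsym : S.toEuclideanLin.IsSymmetric := Matrix.isHermitian_iff_isSymmetric.mp hS
  have hrange := aux_range_eq_ker_orthogonal hsym
  set y' : EuclideanSpace ℝ (Fin p) := (WithLp.equiv 2 (Fin p → ℝ)).symm y with hy'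
  have hmem : y' ∈ (LinearMap.ker S.toEuclideanLin)ᗮ := by
    intro v hv
    have hv0 : S *ᵥ (WithLp.equiv 2 (Fin p → ℝ) v) = 0 := by
      have : S.toEuclideanLin v = 0 := hv
      rw [Matrix.toEuclideanLin_apply] at this
      simpa using congrArg (WithLp.equiv 2 (Fin p → ℝ)) this
    have := hy _ hv0
    simpa [PiLp.inner_apply, dotProduct, y', RCLike.inner_apply, mul_comm] using this
  rw [← hrange] at hmem
  obtain ⟨z, hz⟩ := hmem
  refine ⟨WithLp.equiv 2 (Fin p → ℝ) z, ?_⟩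
  rw [Matrix.toEuclideanLin_apply] at hz
  simpa [y'] using congrArg (WithLp.equiv 2 (Fin p → ℝ)) hz

/-- Any posterior more informative than a stable posterior is itself stable: if
`(Σ_x − Σ*)^{1/2} V_i (Σ_x − Σ*)^{1/2} ⪰ O` for all `i`, and `Σ* ⪯ Σᶜ ⪯ Σ_x`, then
`(Σ_x − Σᶜ)^{1/2} V_i (Σ_x − Σᶜ)^{1/2} ⪰ O` for all `i`. -/
theorem stable_of_more_informative {p : ℕ} {ι : Type*}
    (Sx Sstar Sc : Matrix (Fin p) (Fin p) ℝ) (hSx : Sx.PosDef)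
    (V : ι → Matrix (Fin p) (Fin p) ℝ) (hV : ∀ i, (V i).IsSymm)
    (hstar : (Sx - Sstar).PosSemidef)
    (hstable : ∀ i, (hstar.sqrt * V i * hstar.sqrt).PosSemidef)
    (h1 : (Sc - Sstar).PosSemidef) (hc : (Sx - Sc).PosSemidef) :
    ∀ i, (hc.sqrt * V i * hc.sqrt).PosSemidef := by
  intro i
  set S := hstar.sqrt with hSdef
  set T := hc.sqrt with hTdef
  have hSpsd : S.PosSemidef := hstar.posSemidef_sqrt
  have hTpsd : T.PosSemidef := hc.posSemidef_sqrt
  have hSS : S * S = Sx - Sstar := hstar.sqrt_mul_self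
  have hTT : T * T = Sx - Sc := hc.sqrt_mul_self
  have hSh : S.IsHermitian := hSpsd.1
  have hTh : T.IsHermitian := hTpsd.1
  have hST : Tᵀ = T := by
    have := hTh
    rwa [Matrix.IsHermitian, Matrix.conjTranspose_eq_transpose_of_trivial] at this
  have hSsym : Sᵀ = S := by
    have := hSh
    rwa [Matrix.IsHermitian, Matrix.conjTranspose_eq_transpose_of_trivial] at this
  have hvmT : ∀ w : Fin p → ℝ, w ᵥ* T = T *ᵥ w := fun w => by
    rw [← Matrix.mulVec_transpose, hST]
  have hvmS : ∀ w : Fin p → ℝ, w ᵥ* S = S *ᵥ w := fun w => by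
    rw [← Matrix.mulVec_transpose, hSsym]
  -- kernel inclusion: S v = 0 → T v = 0
  have hker : ∀ v : Fin p → ℝ, S *ᵥ v = 0 → T *ᵥ v = 0 := by
    intro v hv
    have hAv : v ⬝ᵥ ((Sx - Sstar) *ᵥ v) = 0 := by
      rw [← hSS, ← Matrix.mulVec_mulVec, hv, Matrix.mulVec_zero, dotProduct_zero]
    have hdiff : (Sx - Sstar) - (Sx - Sc) = Sc - Sstar := by abel
    have h1' : 0 ≤ v ⬝ᵥ ((Sc - Sstar) *ᵥ v) := by simpa using h1.dotProduct_mulVec_nonneg v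
    have hc' : 0 ≤ v ⬝ᵥ ((Sx - Sc) *ᵥ v) := by simpa using hc.dotProduct_mulVec_nonneg v
    have hBv : v ⬝ᵥ ((Sx - Sc) *ᵥ v) = 0 := by
      have : v ⬝ᵥ ((Sx - Sstar) *ᵥ v) - v ⬝ᵥ ((Sx - Sc) *ᵥ v)
          = v ⬝ᵥ ((Sc - Sstar) *ᵥ v) := by
        rw [← dotProduct_sub, ← Matrix.sub_mulVec, hdiff]
      linarith [hAv ▸ this]
    have hTvTv : (T *ᵥ v) ⬝ᵥ (T *ᵥ v) = 0 := by
      calc (T *ᵥ v) ⬝ᵥ (T *ᵥ v)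
          = ((T *ᵥ v) ᵥ* T) ⬝ᵥ v := Matrix.dotProduct_mulVec _ _ _
        _ = ((T * T) *ᵥ v) ⬝ᵥ v := by rw [hvmT, Matrix.mulVec_mulVec]
        _ = v ⬝ᵥ ((Sx - Sc) *ᵥ v) := by rw [hTT, dotProduct_comm]
        _ = 0 := hBv
    exact dotProduct_self_eq_zero.mp hTvTv
  refine Matrix.PosSemidef.of_dotProduct_mulVec_nonneg ?_ (fun x => ?_)
  · -- Hermitian
    have hTH : Tᴴ = T := hTh
    have hVH : (V i)ᴴ = V i := by
      rw [Matrix.conjTranspose_eq_transpose_of_trivial]; exact hV i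
    show (T * V i * T)ᴴ = T * V i * T
    rw [Matrix.conjTranspose_mul, Matrix.conjTranspose_mul, hTH, hVH,
      Matrix.mul_assoc]
  · -- quadratic form
    have hmem : ∃ z, S *ᵥ z = T *ᵥ x := by
      apply aux_exists_mulVec hSh
      intro v hv
      have hTv := hker v hv
      calc v ⬝ᵥ (T *ᵥ x) = (v ᵥ* T) ⬝ᵥ x := Matrix.dotProduct_mulVec _ _ _
        _ = 0 := by rw [hvmT, hTv, zero_dotProduct]
    obtain ⟨z, hz⟩ := hmem
    have quad : ∀ (M R : Matrix (Fin p) (Fin p) ℝ), Rᵀ = R → ∀ w : Fin p → ℝ,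
        w ⬝ᵥ ((R * M * R) *ᵥ w) = (R *ᵥ w) ⬝ᵥ (M *ᵥ (R *ᵥ w)) := by
      intro M R hR w
      rw [← Matrix.mulVec_mulVec, ← Matrix.mulVec_mulVec, Matrix.dotProduct_mulVec,
        ← Matrix.mulVec_transpose, hR]
    have key : star x ⬝ᵥ ((T * V i * T) *ᵥ x) = star z ⬝ᵥ ((S * V i * S) *ᵥ z) := by
      simp only [star_trivial]
      rw [quad (V i) T hST x, quad (V i) S hSsym z, ← hz]
    rw [key]
    exact (hstable i).dotProduct_mulVec_nonneg z
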